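/- arXiv:1902.06879 — 2 statements merged into one kernel-verified Lean document; each statement's English description precedes it below -/
import Mathlib

section
/- Let r ≥ 1, let s_1,…,s_r be positive integers, set d_i := s_i+⋯+s_r, and let Q_1,…,Q_{r−1} ∈ F[t] be polynomials with deg Q_k ≤ μ_k and with every coefficient of Q_k of absolute value ≤ q^{s_k·q/(q−1)}. Let c_{i,j} ∈ F (1 ≤ i ≤ r, 1 ≤ j ≤ d_i) satisfy |c_{i,j}| < q^{j + d_i/(q−1)}. For n ≥ 1 and 1 ≤ ℓ ≤ r define g_n^{(ℓ)} := Σ_{ℓ≤i≤r} Σ_{1≤j≤d_i} (−1)^{i−ℓ}·c_{i,j}^{q^n}·(t−θ^{q^n})^{d_i−j}·Σ_{ℓ=k_0≤k_1≤⋯≤k_n=i} Π_{m=1}^{n} (Π_{k_{m−1}≤k<k_m} Q_k^{(m−1)})·((t−θ^{q^m})^{d_{k_m}})^{−1} ∈ F[[t]], where the inner sum ranges over all weakly increasing integer chains k_0 ≤ k_1 ≤ ⋯ ≤ k_n with k_0 = ℓ and k_n = i, (t−θ^{q^m})^{−1} denotes the inverse in F[[t]], and empty products equal 1. Then for each ℓ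 and n the Gauss norm of g_n^{(ℓ)} is finite and satisfies ‖g_n^{(ℓ)}‖_θ ≤ max over ℓ ≤ i ≤ r and 1 ≤ j ≤ d_i of q^{(μ_ℓ+⋯+μ_{i−1}) + d_ℓ·q/(q−1)}·(|c_{i,j}|·q^{−j−d_i/(q−1)})^{q^n}; consequently ‖g_n^{(ℓ)}‖_θ → 0 as n → ∞, and there exists g^{(ℓ)} ∈ F[[t]] with finite Gauss norm such that ‖g^{(ℓ)} − Σ_{n=1}^{N} g_n^{(ℓ)}‖_θ → 0 as N → ∞. (This is Proposition 3.?/4.2 of the paper: the series defining 𝐠 = Σ_{n≥1} 𝐰^{(n)}(Φ′^{−1})^{(n)}⋯(Φ′^{−1})^{(1)} converges in the Tate algebra 𝕋_θ.) -/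
open PowerSeries Filter Topology
open scoped ENNReal Classical

noncomputable section

variable {F : Type*} [NormedField F]

/-- Gauss norm `‖f‖_θ = sup_m |c_m|·q^m ∈ [0,∞]` on `F[[t]]`. -/
def gaussNorm (q : ℕ) (f : PowerSeries F) : ℝ≥0∞ :=
  ⨆ m : ℕ, (‖PowerSeries.coeff m f‖₊ : ℝ≥0∞) * (q : ℝ≥0∞) ^ m

/-- `n`-fold Frobenius (`q^n`-th power) twist of a polynomial, applied coefficientwise. -/
def ptwist (q n : ℕ) (P : Polynomial F) : Polynomial F :=
  ∑ j ∈ Finset.range (P.natDegree + 1), Polynomial.C (P.coeff j ^ q ^ n) * Polynomial.X ^ j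

/-- The product over `m = 1,…,n` of
`(Π_{k_{m−1} ≤ k < k_m} Q_k^{(m−1)}) · ((t−θ^{q^m})^{d_{k_m}})⁻¹`,
attached to a weakly increasing chain `kc : Fin (n+1) → ℕ`; the inverse is taken in
`F[[t]]` and empty products equal `1`. -/
def chainProd (q : ℕ) (θ : F) (d : ℕ → ℕ) (Q : ℕ → Polynomial F) {n : ℕ}
    (kc : Fin (n + 1) → ℕ) : PowerSeries F :=
  ∏ m : Fin n,
    (∏ k ∈ Finset.Ico (kc m.castSucc) (kc m.succ), (ptwist q (m : ℕ) (Q k) : PowerSeries F)) *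
      ((PowerSeries.X - PowerSeries.C (θ ^ q ^ ((m : ℕ) + 1))) ^ d (kc m.succ))⁻¹

/-- The series `g_n^{(ℓ)}` from the proof of Proposition 4.2 of the paper. -/
def gSeries (q : ℕ) (θ : F) (d : ℕ → ℕ) (Q : ℕ → Polynomial F) (c : ℕ → ℕ → F)
    (r l n : ℕ) : PowerSeries F :=
  ∑ i ∈ Finset.Icc l r, ∑ j ∈ Finset.Icc 1 (d i),
    ((-1 : PowerSeries F) ^ (i - l) * PowerSeries.C (c i j ^ q ^ n) *
        (PowerSeries.X - PowerSeries.C (θ ^ q ^ n)) ^ (d i - j)) *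
      ∑ kc ∈ (Fintype.piFinset fun _ : Fin (n + 1) => Finset.Icc l i).filter
          (fun kc => Monotone kc ∧ kc 0 = l ∧ kc (Fin.last n) = i),
        chainProd q θ d Q kc

/-!
The Gauss norm `‖·‖_θ` is ultrametric and submultiplicative on `F[[t]]`, and
`‖(t - b)⁻¹‖_θ = |b|⁻¹` once `|b| ≥ q`, because `(t - b)⁻¹ = -Σ_k t^k / b^{k+1}`.
Along a chain `ℓ = k_0 ≤ ⋯ ≤ k_n = i`, the `m`-th factor therefore has Gauss norm at most
`q` to the power `Σ_{k_{m-1} ≤ k < k_m} μ_k + q^m (d_{k_{m-1}} - d_{k_m})/(q-1) - q^m d_{k_m}`,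
using `d_{k_{m-1}} - d_{k_m} = s_{k_{m-1}} + ⋯ + s_{k_m - 1}`. Writing
`q^m d_{k_m}/(q-1) + q^m d_{k_m} = q^{m+1} d_{k_m}/(q-1)` these exponents telescope to
`μ_ℓ + ⋯ + μ_{i-1} + q d_ℓ/(q-1) - q^{n+1} d_i/(q-1)`, and multiplying by
`|c_{i,j}|^{q^n} q^{q^n (d_i - j)}` gives the stated bound. It tends to `0` since
`|c_{i,j}| q^{-j-d_i/(q-1)} < 1`. Finally, a series whose terms tend to `0` in Gauss norm converges
coefficientwise in the complete nonarchimedean field `F`, and the Gauss norm of each tail of the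
limit is bounded by the supremum of the Gauss norms of the remaining terms.
-/

open scoped NNReal

section GaussNorm

variable (q : ℕ)

theorem coeff_le_gaussNorm (f : PowerSeries F) (m : ℕ) :
    (‖coeff m f‖₊ : ℝ≥0∞) * (q : ℝ≥0∞) ^ m ≤ gaussNorm q f :=
  le_iSup (fun m => (‖coeff m f‖₊ : ℝ≥0∞) * (q : ℝ≥0∞) ^ m) m

theorem gaussNorm_le_iff {f : PowerSeries F} {B : ℝ≥0∞} :
    gaussNorm q f ≤ B ↔ ∀ m, (‖coeff m f‖₊ : ℝ≥0∞) * (q : ℝ≥0∞) ^ m ≤ B :=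
  iSup_le_iff

theorem gaussNorm_neg (f : PowerSeries F) : gaussNorm q (-f) = gaussNorm q f := by
  simp [_root_.gaussNorm]

theorem gaussNorm_C_eq_nnnorm (a : F) : gaussNorm q (C a) = ‖a‖₊ := by
  refine le_antisymm ((gaussNorm_le_iff q).2 fun m => ?_)
    (by simpa using coeff_le_gaussNorm q (C a) 0)
  rcases eq_or_ne m 0 with rfl | hm
  · simp
  · simp [coeff_C, hm]

theorem gaussNorm_one : gaussNorm q (1 : PowerSeries F) = 1 := by
  simpa using gaussNorm_C_eq_nnnorm q (1 : F)

theorem gaussNorm_X_sub_C_le {b : F} (hb : (q : ℝ≥0∞) ≤ ‖b‖₊) :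
    gaussNorm q (X - C b) ≤ ‖b‖₊ := by
  refine (gaussNorm_le_iff q).2 fun m => ?_
  match m with
  | 0 => simp
  | 1 => simpa [coeff_X] using hb
  | m + 2 => simp [coeff_X]

theorem gaussNorm_inv_X_sub_C_le {b : F} (hb : (q : ℝ≥0∞) ≤ ‖b‖₊) :
    gaussNorm q (X - C b)⁻¹ ≤ (‖b‖₊ : ℝ≥0∞)⁻¹ := by
  rcases eq_or_ne b 0 with rfl | hb0
  · simp
  have hinv : (X - C b)⁻¹ = -invUnitsSub (Units.mk0 b hb0) := by
    refine (PowerSeries.inv_eq_iff_mul_eq_one (by simpa using hb0)).2 ?_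
    rw [← invUnitsSub_mul_sub (Units.mk0 b hb0), Units.val_mk0]
    ring
  have hB0 : (‖b‖₊ : ℝ≥0∞) ≠ 0 := by simpa using hb0
  refine (gaussNorm_le_iff q).2 fun m => ?_
  rw [hinv, map_neg, nnnorm_neg, coeff_invUnitsSub, one_divp, Units.val_inv_eq_inv_val,
    Units.val_pow_eq_pow_val, Units.val_mk0, nnnorm_inv, nnnorm_pow, ENNReal.coe_inv (by simpa),
    ENNReal.coe_pow]
  calc ((‖b‖₊ : ℝ≥0∞) ^ (m + 1))⁻¹ * (q : ℝ≥0∞) ^ m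
      ≤ ((‖b‖₊ : ℝ≥0∞) ^ (m + 1))⁻¹ * (‖b‖₊ : ℝ≥0∞) ^ m := by gcongr
    _ = (‖b‖₊ : ℝ≥0∞)⁻¹ := by
        rw [pow_succ, ENNReal.mul_inv (by simp [hB0]) (by simp), mul_comm, ← mul_assoc,
          ENNReal.mul_inv_cancel (by simp [hB0]) (by simp), one_mul]

variable [IsUltrametricDist F]

theorem gaussNorm_add_le (f g : PowerSeries F) :
    gaussNorm q (f + g) ≤ max (gaussNorm q f) (gaussNorm q g) := by
  refine (gaussNorm_le_iff q).2 fun m => ?_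
  calc (‖coeff m (f + g)‖₊ : ℝ≥0∞) * (q : ℝ≥0∞) ^ m
      ≤ max (‖coeff m f‖₊ : ℝ≥0∞) ‖coeff m g‖₊ * (q : ℝ≥0∞) ^ m := by
        rw [map_add]; gcongr; exact_mod_cast IsUltrametricDist.nnnorm_add_le_max _ _
    _ = max ((‖coeff m f‖₊ : ℝ≥0∞) * (q : ℝ≥0∞) ^ m) (‖coeff m g‖₊ * (q : ℝ≥0∞) ^ m) :=
        max_mul_of_nonneg _ _ zero_le
    _ ≤ _ := max_le_max (coeff_le_gaussNorm q f m) (coeff_le_gaussNorm q g m)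

theorem gaussNorm_sum_le {ι : Type*} (s : Finset ι) (f : ι → PowerSeries F) :
    gaussNorm q (∑ a ∈ s, f a) ≤ s.sup fun a => gaussNorm q (f a) := by
  induction s using Finset.cons_induction with
  | empty => simp [_root_.gaussNorm]
  | cons a s ha ih =>
    rw [Finset.sum_cons, Finset.sup_cons]
    exact (gaussNorm_add_le q _ _).trans (max_le_max le_rfl ih)

theorem gaussNorm_mul_le (f g : PowerSeries F) :
    gaussNorm q (f * g) ≤ gaussNorm q f * gaussNorm q g := by
  refine (gaussNorm_le_iff q).2 fun m => ?_
  obtain ⟨p, hp, hle⟩ := IsUltrametricDist.exists_norm_finsetSum_le_of_nonempty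
    (t := Finset.HasAntidiagonal.antidiagonal m) ⟨(0, m), by simp⟩
    fun p : ℕ × ℕ => coeff p.1 f * coeff p.2 g
  rw [Finset.HasAntidiagonal.mem_antidiagonal] at hp
  calc (‖coeff m (f * g)‖₊ : ℝ≥0∞) * (q : ℝ≥0∞) ^ m
      ≤ ‖coeff p.1 f * coeff p.2 g‖₊ * (q : ℝ≥0∞) ^ (p.1 + p.2) := by
        rw [hp, coeff_mul]
        gcongr
        exact_mod_cast hle
    _ = (‖coeff p.1 f‖₊ * (q : ℝ≥0∞) ^ p.1) * (‖coeff p.2 g‖₊ * (q : ℝ≥0∞) ^ p.2) := by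
        rw [nnnorm_mul, ENNReal.coe_mul, pow_add]; ring
    _ ≤ _ := mul_le_mul' (coeff_le_gaussNorm q f p.1) (coeff_le_gaussNorm q g p.2)

theorem gaussNorm_prod_le {ι : Type*} (s : Finset ι) (f : ι → PowerSeries F) :
    gaussNorm q (∏ a ∈ s, f a) ≤ ∏ a ∈ s, gaussNorm q (f a) := by
  induction s using Finset.cons_induction with
  | empty => simp [gaussNorm_one]
  | cons a s ha ih =>
    rw [Finset.prod_cons, Finset.prod_cons]
    exact (gaussNorm_mul_le q _ _).trans (mul_le_mul' le_rfl ih)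

theorem gaussNorm_pow_le (f : PowerSeries F) (e : ℕ) :
    gaussNorm q (f ^ e) ≤ gaussNorm q f ^ e := by
  simpa using gaussNorm_prod_le q (Finset.range e) fun _ => f

theorem gaussNorm_inv_pow_le (f : PowerSeries F) (e : ℕ) :
    gaussNorm q (f ^ e)⁻¹ ≤ gaussNorm q f⁻¹ ^ e := by
  induction e with
  | zero => simp [gaussNorm_one]
  | succ e ih =>
    rw [pow_succ, PowerSeries.mul_inv_rev, pow_succ']
    exact (gaussNorm_mul_le q _ _).trans (mul_le_mul' le_rfl ih)

end GaussNorm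

section Summation

variable [IsUltrametricDist F] {q : ℕ}

theorem gaussNorm_mk_tsum_le (hq : 0 < q) {ι : Type*} {f : ι → PowerSeries F} {B : ℝ≥0∞}
    (h : ∀ i, gaussNorm q (f i) ≤ B) : gaussNorm q (mk fun m => ∑' i, coeff m (f i)) ≤ B := by
  refine (gaussNorm_le_iff q).2 fun m => ?_
  rcases eq_or_ne B ⊤ with rfl | hB
  · exact le_top
  lift B to ℝ≥0 using hB
  have hqm : (0 : ℝ≥0) < (q : ℝ≥0) ^ m := by positivity
  have hsum : ‖∑' i, coeff m (f i)‖₊ ≤ B / (q : ℝ≥0) ^ m :=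
    IsUltrametricDist.nnnorm_tsum_le_of_forall_le fun i => by
      rw [le_div_iff₀ hqm]
      exact_mod_cast (coeff_le_gaussNorm q (f i) m).trans (h i)
  rw [coeff_mk]
  exact_mod_cast (le_div_iff₀ hqm).1 hsum

theorem exists_tendsto_gaussNorm_sub_sum [CompleteSpace F] (hq : 0 < q) {f : ℕ → PowerSeries F}
    (hfin : ∀ n, gaussNorm q (f n) ≠ ⊤)
    (hf : Tendsto (fun n => gaussNorm q (f n)) atTop (𝓝 0)) :
    ∃ g : PowerSeries F, gaussNorm q g ≠ ⊤ ∧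
      Tendsto (fun N => gaussNorm q (g - ∑ n ∈ Finset.range N, f n)) atTop (𝓝 0) := by
  have hsum : ∀ m, Summable fun n => coeff m (f n) := by
    intro m
    refine NonarchimedeanAddGroup.summable_of_tendsto_cofinite_zero ?_
    rw [Nat.cofinite_eq_atTop, tendsto_zero_iff_enorm_tendsto_zero]
    refine tendsto_of_tendsto_of_tendsto_of_le_of_le tendsto_const_nhds hf (fun _ => zero_le)
      fun n => ?_
    rw [enorm_eq_nnnorm]
    exact (le_mul_of_one_le_right' (one_le_pow₀ (by exact_mod_cast hq))).trans
      (coeff_le_gaussNorm q (f n) m)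
  set g : PowerSeries F := mk fun m => ∑' n, coeff m (f n)
  have htail : ∀ N, g - ∑ n ∈ Finset.range N, f n = mk fun m => ∑' n, coeff m (f (n + N)) := by
    intro N
    ext m
    rw [map_sub, map_sum, coeff_mk, coeff_mk, ← (hsum m).sum_add_tsum_nat_add N,
      add_sub_cancel_left]
  have hsmall : ∀ ε > 0, ∃ N₀, ∀ N ≥ N₀, gaussNorm q (g - ∑ n ∈ Finset.range N, f n) ≤ ε := by
    intro ε hε
    obtain ⟨N₀, hN₀⟩ := ENNReal.tendsto_atTop_zero.1 hf ε hε
    exact ⟨N₀, fun N hN => htail N ▸ gaussNorm_mk_tsum_le hq fun n => hN₀ _ (by omega)⟩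
  refine ⟨g, ?_, ENNReal.tendsto_atTop_zero.2 hsmall⟩
  obtain ⟨N₀, hN₀⟩ := hsmall 1 one_pos
  have hpartial : gaussNorm q (∑ n ∈ Finset.range N₀, f n) < ⊤ :=
    (gaussNorm_sum_le q _ _).trans_lt ((Finset.sup_lt_iff (by simp)).2 fun n _ => (hfin n).lt_top)
  rw [← sub_add_cancel g (∑ n ∈ Finset.range N₀, f n)]
  exact ((gaussNorm_add_le q _ _).trans_lt
    (max_lt ((hN₀ N₀ le_rfl).trans_lt ENNReal.one_lt_top) hpartial)).ne

end Summation

theorem ENNReal.rpow_sum {x : ℝ≥0∞} (hx0 : x ≠ 0) (hx : x ≠ ⊤) {ι : Type*} (s : Finset ι)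
    (f : ι → ℝ) : x ^ (∑ a ∈ s, f a) = ∏ a ∈ s, x ^ f a := by
  induction s using Finset.cons_induction with
  | empty => simp
  | cons a s ha ih => rw [Finset.sum_cons, Finset.prod_cons, ENNReal.rpow_add _ _ hx0 hx, ih]

theorem ofReal_natCast_rpow {q : ℕ} (hq : 0 < q) (x : ℝ) :
    ENNReal.ofReal ((q : ℝ) ^ x) = (q : ℝ≥0∞) ^ x := by
  rw [← ENNReal.ofReal_rpow_of_pos (by positivity), ENNReal.ofReal_natCast]

theorem coe_nnnorm_pow_of_norm_eq {q : ℕ} {θ : F} (hθ : ‖θ‖ = q) (N : ℕ) :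
    (‖θ ^ N‖₊ : ℝ≥0∞) = (q : ℝ≥0∞) ^ N := by
  have : ‖θ‖₊ = q := NNReal.eq (by simpa using hθ)
  simp [nnnorm_pow, this]

theorem coeff_ptwist {q : ℕ} (hq : 0 < q) (M : ℕ) (P : Polynomial F) (m : ℕ) :
    (ptwist q M P).coeff m = P.coeff m ^ q ^ M := by
  rw [ptwist, Polynomial.finsetSum_coeff]
  simp only [Polynomial.coeff_C_mul, Polynomial.coeff_X_pow, mul_ite, mul_one, mul_zero,
    Finset.sum_ite_eq, Finset.mem_range]
  split_ifs with hm
  · rfl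
  · rw [Polynomial.coeff_eq_zero_of_natDegree_lt (by omega), zero_pow (by positivity)]

theorem gaussNorm_ptwist_le {q : ℕ} (hq : 0 < q) {P : Polynomial F} {D : ℕ} {x : ℝ}
    (hdeg : P.natDegree ≤ D) (hP : ∀ m, ‖P.coeff m‖ ≤ (q : ℝ) ^ x) (M : ℕ) :
    gaussNorm q (ptwist q M P : PowerSeries F) ≤ (q : ℝ≥0∞) ^ ((D : ℝ) + x * q ^ M) := by
  refine (gaussNorm_le_iff q).2 fun m => ?_
  rw [Polynomial.coeff_coe, coeff_ptwist hq]
  rcases eq_or_ne (P.coeff m) 0 with h | h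
  · simp [h, zero_pow (pow_ne_zero M hq.ne')]
  have hmD : m ≤ D := (Polynomial.le_natDegree_of_ne_zero h).trans hdeg
  have hcoeff : (‖P.coeff m‖₊ : ℝ≥0∞) ≤ (q : ℝ≥0∞) ^ x := by
    rw [← ofReal_natCast_rpow hq, ← enorm_eq_nnnorm, ← ofReal_norm]
    exact ENNReal.ofReal_le_ofReal (hP m)
  calc (‖P.coeff m ^ q ^ M‖₊ : ℝ≥0∞) * (q : ℝ≥0∞) ^ m
      ≤ ((q : ℝ≥0∞) ^ x) ^ (q ^ M) * (q : ℝ≥0∞) ^ D := by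
        rw [nnnorm_pow, ENNReal.coe_pow]
        exact mul_le_mul' (pow_le_pow_left' hcoeff _)
          (pow_le_pow_right₀ (by exact_mod_cast hq) hmD)
    _ = (q : ℝ≥0∞) ^ ((D : ℝ) + x * q ^ M) := by
        rw [← ENNReal.rpow_natCast _ (q ^ M), ← ENNReal.rpow_mul, ← ENNReal.rpow_natCast _ D,
          mul_comm, ← ENNReal.rpow_add _ _ (by simp [hq.ne']) (by simp)]
        push_cast
        rfl

theorem chainProd_succ (q : ℕ) (θ : F) (d : ℕ → ℕ) (Q : ℕ → Polynomial F) {n : ℕ}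
    (kc : Fin (n + 2) → ℕ) :
    chainProd q θ d Q kc = chainProd q θ d Q (Fin.init kc) *
      ((∏ k ∈ Finset.Ico (kc (Fin.last n).castSucc) (kc (Fin.last (n + 1))),
          (ptwist q n (Q k) : PowerSeries F)) *
        ((X - C (θ ^ q ^ (n + 1))) ^ d (kc (Fin.last (n + 1))))⁻¹) := by
  rw [chainProd, Fin.prod_univ_castSucc]
  rfl

def gSeriesBound (q : ℕ) (d μ : ℕ → ℕ) (c : ℕ → ℕ → F) (r l n : ℕ) : ℝ≥0∞ :=
  (Finset.Icc l r).sup fun i => (Finset.Icc 1 (d i)).sup fun j =>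
    ENNReal.ofReal ((q : ℝ) ^ (((∑ k ∈ Finset.Ico l i, μ k : ℕ) : ℝ)
        + (d l : ℝ) * (q : ℝ) / ((q : ℝ) - 1)) *
      (‖c i j‖ * (q : ℝ) ^ (-(j : ℝ) - (d i : ℝ) / ((q : ℝ) - 1))) ^ q ^ n)

section Chain

variable [IsUltrametricDist F] {q : ℕ} {r : ℕ} {s d μ : ℕ → ℕ} {Q : ℕ → Polynomial F}

theorem sum_Ico_cast_eq_sub_of_eq_sum_Icc (hd : ∀ i, d i = ∑ k ∈ Finset.Icc i r, s k) {a b : ℕ}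
    (hab : a ≤ b) (hbr : b ≤ r + 1) :
    ∑ k ∈ Finset.Ico a b, (s k : ℝ) = d a - d b := by
  have h : d a = ∑ k ∈ Finset.Ico a b, s k + d b := by
    rw [hd a, hd b, ← Finset.Ico_add_one_right_eq_Icc, ← Finset.Ico_add_one_right_eq_Icc,
      Finset.sum_Ico_consecutive _ hab hbr]
  rw [h]
  push_cast
  ring

theorem gaussNorm_prod_ptwist_le (hq : 2 ≤ q) (hd : ∀ i, d i = ∑ k ∈ Finset.Icc i r, s k)
    (hQdeg : ∀ k, 1 ≤ k → k ≤ r - 1 → (Q k).natDegree ≤ μ k)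
    (hQ : ∀ k, 1 ≤ k → k ≤ r - 1 → ∀ m,
      ‖(Q k).coeff m‖ ≤ (q : ℝ) ^ ((s k : ℝ) * (q : ℝ) / ((q : ℝ) - 1)))
    {a b : ℕ} (ha : 1 ≤ a) (hab : a ≤ b) (hbr : b ≤ r) (M : ℕ) :
    gaussNorm q (∏ k ∈ Finset.Ico a b, (ptwist q M (Q k) : PowerSeries F)) ≤
      (q : ℝ≥0∞) ^ (∑ k ∈ Finset.Ico a b, (μ k : ℝ) +
        (q : ℝ) ^ (M + 1) * (d a - d b) / ((q : ℝ) - 1)) := by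
  have hq1 : (q : ℝ) - 1 ≠ 0 := sub_ne_zero.2 (by exact_mod_cast (by omega : q ≠ 1))
  calc gaussNorm q (∏ k ∈ Finset.Ico a b, (ptwist q M (Q k) : PowerSeries F))
      ≤ ∏ k ∈ Finset.Ico a b,
          (q : ℝ≥0∞) ^ ((μ k : ℝ) + (s k : ℝ) * (q : ℝ) / ((q : ℝ) - 1) * q ^ M) := by
        refine (gaussNorm_prod_le q _ _).trans (Finset.prod_le_prod' fun k hk => ?_)
        obtain ⟨hak, hkb⟩ := Finset.mem_Ico.1 hk
        exact gaussNorm_ptwist_le (by omega) (hQdeg k (by omega) (by omega))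
          (hQ k (by omega) (by omega)) M
    _ = _ := by
        rw [← ENNReal.rpow_sum (by simp; omega) (by simp), Finset.sum_add_distrib,
          ← Finset.sum_mul, ← Finset.sum_div, ← Finset.sum_mul,
          sum_Ico_cast_eq_sub_of_eq_sum_Icc hd hab (by omega)]
        congr 2
        field_simp
        ring

theorem gaussNorm_inv_X_sub_C_pow_le (hq : 0 < q) {θ : F} (hθ : ‖θ‖ = q) {N : ℕ} (hN : N ≠ 0)
    (e : ℕ) :
    gaussNorm q (((X - C (θ ^ N)) ^ e)⁻¹ : PowerSeries F) ≤ (q : ℝ≥0∞) ^ (-((N : ℝ) * e)) := by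
  have hθN := coe_nnnorm_pow_of_norm_eq hθ N
  calc gaussNorm q (((X - C (θ ^ N)) ^ e)⁻¹ : PowerSeries F)
      ≤ gaussNorm q (X - C (θ ^ N))⁻¹ ^ e := gaussNorm_inv_pow_le q _ e
    _ ≤ ((q : ℝ≥0∞) ^ N)⁻¹ ^ e := by
        rw [← hθN]
        gcongr
        exact gaussNorm_inv_X_sub_C_le q (hθN ▸ le_self_pow₀ (by exact_mod_cast hq) hN)
    _ = (q : ℝ≥0∞) ^ (-((N : ℝ) * e)) := by
        rw [ENNReal.rpow_neg, ← ENNReal.inv_pow, ← pow_mul, ← ENNReal.rpow_natCast]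
        push_cast
        rfl

theorem gaussNorm_chainProd_le (hq : 2 ≤ q) {θ : F} (hθ : ‖θ‖ = q)
    (hd : ∀ i, d i = ∑ k ∈ Finset.Icc i r, s k)
    (hQdeg : ∀ k, 1 ≤ k → k ≤ r - 1 → (Q k).natDegree ≤ μ k)
    (hQ : ∀ k, 1 ≤ k → k ≤ r - 1 → ∀ m,
      ‖(Q k).coeff m‖ ≤ (q : ℝ) ^ ((s k : ℝ) * (q : ℝ) / ((q : ℝ) - 1)))
    {l : ℕ} (hl : 1 ≤ l) {n : ℕ} {kc : Fin (n + 1) → ℕ} (hmono : Monotone kc) (h0 : kc 0 = l)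
    (hlast : kc (Fin.last n) ≤ r) :
    gaussNorm q (chainProd q θ d Q kc) ≤
      (q : ℝ≥0∞) ^ (∑ k ∈ Finset.Ico l (kc (Fin.last n)), (μ k : ℝ) +
        (d l : ℝ) * q / (q - 1) - (q : ℝ) ^ (n + 1) * d (kc (Fin.last n)) / (q - 1)) := by
  have hq1 : (q : ℝ) - 1 ≠ 0 := sub_ne_zero.2 (by exact_mod_cast (by omega : q ≠ 1))
  induction n with
  | zero =>
    have hexp : (d l : ℝ) * q / (q - 1) - q * d l / (q - 1) = 0 := by ring
    simp [Fin.last_zero, h0, chainProd, gaussNorm_one, hexp]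
  | succ n ih =>
    set a := kc (Fin.last n).castSucc
    set b := kc (Fin.last (n + 1))
    have hla : l ≤ a := h0 ▸ hmono (Fin.zero_le _)
    have hab : a ≤ b := hmono (Fin.le_last _)
    have hinit : gaussNorm q (chainProd q θ d Q (Fin.init kc)) ≤
        (q : ℝ≥0∞) ^ (∑ k ∈ Finset.Ico l a, (μ k : ℝ) + (d l : ℝ) * q / (q - 1) -
          (q : ℝ) ^ (n + 1) * d a / (q - 1)) :=
      ih (hmono.comp Fin.strictMono_castSucc.monotone) h0 (hab.trans hlast)
    rw [chainProd_succ]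
    refine (gaussNorm_mul_le q _ _).trans ((mul_le_mul' hinit ((gaussNorm_mul_le q _ _).trans
      (mul_le_mul' (gaussNorm_prod_ptwist_le hq hd hQdeg hQ (hl.trans hla) hab hlast n)
        (gaussNorm_inv_X_sub_C_pow_le (by omega) hθ (by positivity) (d b))))).trans_eq ?_)
    rw [← ENNReal.rpow_add _ _ (by simp; omega) (by simp),
      ← ENNReal.rpow_add _ _ (by simp; omega) (by simp), ← Finset.sum_Ico_consecutive _ hla hab]
    congr 1
    field_simp
    push_cast
    ring

theorem gaussNorm_gSeries_term_le (hq : 2 ≤ q) {θ : F} (hθ : ‖θ‖ = q)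
    (hd : ∀ i, d i = ∑ k ∈ Finset.Icc i r, s k)
    (hQdeg : ∀ k, 1 ≤ k → k ≤ r - 1 → (Q k).natDegree ≤ μ k)
    (hQ : ∀ k, 1 ≤ k → k ≤ r - 1 → ∀ m,
      ‖(Q k).coeff m‖ ≤ (q : ℝ) ^ ((s k : ℝ) * (q : ℝ) / ((q : ℝ) - 1)))
    {l i j n : ℕ} (hl : 1 ≤ l) (hir : i ≤ r) (hj : j ≤ d i) (x : F) :
    gaussNorm q ((-1 : PowerSeries F) ^ (i - l) * C (x ^ q ^ n) *
        (X - C (θ ^ q ^ n)) ^ (d i - j) *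
      ∑ kc ∈ (Fintype.piFinset fun _ : Fin (n + 1) => Finset.Icc l i).filter
          (fun kc => Monotone kc ∧ kc 0 = l ∧ kc (Fin.last n) = i),
        chainProd q θ d Q kc : PowerSeries F) ≤
      ENNReal.ofReal ((q : ℝ) ^ (((∑ k ∈ Finset.Ico l i, μ k : ℕ) : ℝ)
          + (d l : ℝ) * (q : ℝ) / ((q : ℝ) - 1)) *
        (‖x‖ * (q : ℝ) ^ (-(j : ℝ) - (d i : ℝ) / ((q : ℝ) - 1))) ^ q ^ n) := by
  have hq0 : (q : ℝ≥0∞) ≠ 0 := by simp; omega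
  have hq1 : (q : ℝ) - 1 ≠ 0 := sub_ne_zero.2 (by exact_mod_cast (by omega : q ≠ 1))
  have hsign : gaussNorm q ((-1 : PowerSeries F) ^ (i - l)) ≤ 1 :=
    (gaussNorm_pow_le q _ _).trans (by simp [gaussNorm_neg, gaussNorm_one])
  have hcoeff : gaussNorm q (C (x ^ q ^ n)) = (‖x‖₊ : ℝ≥0∞) ^ q ^ n := by
    rw [gaussNorm_C_eq_nnnorm, nnnorm_pow, ENNReal.coe_pow]
  have hlinear : gaussNorm q ((X - C (θ ^ q ^ n)) ^ (d i - j) : PowerSeries F) ≤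
      ((q : ℝ≥0∞) ^ q ^ n) ^ (d i - j) := by
    rw [← coe_nnnorm_pow_of_norm_eq hθ]
    refine (gaussNorm_pow_le q _ _).trans (pow_le_pow_left' (gaussNorm_X_sub_C_le q ?_) _)
    rw [coe_nnnorm_pow_of_norm_eq hθ]
    exact le_self_pow₀ (by exact_mod_cast (by omega : 1 ≤ q)) (by positivity)
  have hchains : gaussNorm q (∑ kc ∈ (Fintype.piFinset fun _ : Fin (n + 1) =>
        Finset.Icc l i).filter (fun kc => Monotone kc ∧ kc 0 = l ∧ kc (Fin.last n) = i),
        chainProd q θ d Q kc) ≤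
      (q : ℝ≥0∞) ^ (∑ k ∈ Finset.Ico l i, (μ k : ℝ) +
        (d l : ℝ) * q / (q - 1) - (q : ℝ) ^ (n + 1) * d i / (q - 1)) := by
    refine (gaussNorm_sum_le q _ _).trans (Finset.sup_le fun kc hkc => ?_)
    obtain ⟨-, hmono, h0, hlast⟩ := Finset.mem_filter.1 hkc
    simpa only [hlast] using
      gaussNorm_chainProd_le hq hθ hd hQdeg hQ hl hmono h0 (hlast.trans_le hir)
  refine (gaussNorm_mul_le q _ _).trans ((mul_le_mul' ((gaussNorm_mul_le q _ _).trans
    (mul_le_mul' ((gaussNorm_mul_le q _ _).trans (mul_le_mul' hsign hcoeff.le)) hlinear))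
    hchains).trans_eq ?_)
  rw [ENNReal.ofReal_mul (by positivity), ENNReal.ofReal_pow (by positivity),
    ENNReal.ofReal_mul (norm_nonneg _), ofReal_norm, enorm_eq_nnnorm,
    ofReal_natCast_rpow (by omega), ofReal_natCast_rpow (by omega), mul_pow,
    ← ENNReal.rpow_natCast ((q : ℝ≥0∞) ^ _) (q ^ n), ← ENNReal.rpow_mul, ← pow_mul,
    ← ENNReal.rpow_natCast (q : ℝ≥0∞) (q ^ n * (d i - j)), one_mul, mul_assoc,
    ← ENNReal.rpow_add _ _ hq0 (by simp), mul_left_comm,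
    ← ENNReal.rpow_add _ _ hq0 (by simp)]
  congr 2
  push_cast [Nat.cast_sub hj]
  field_simp
  ring

theorem gaussNorm_gSeries_le (hq : 2 ≤ q) {θ : F} (hθ : ‖θ‖ = q)
    (hd : ∀ i, d i = ∑ k ∈ Finset.Icc i r, s k)
    (hQdeg : ∀ k, 1 ≤ k → k ≤ r - 1 → (Q k).natDegree ≤ μ k)
    (hQ : ∀ k, 1 ≤ k → k ≤ r - 1 → ∀ m,
      ‖(Q k).coeff m‖ ≤ (q : ℝ) ^ ((s k : ℝ) * (q : ℝ) / ((q : ℝ) - 1)))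
    (c : ℕ → ℕ → F) {l : ℕ} (hl : 1 ≤ l) (n : ℕ) :
    gaussNorm q (gSeries q θ d Q c r l n) ≤ gSeriesBound q d μ c r l n := by
  refine (gaussNorm_sum_le q _ _).trans (Finset.sup_mono_fun fun i hi => ?_)
  refine (gaussNorm_sum_le q _ _).trans (Finset.sup_mono_fun fun j hj => ?_)
  exact gaussNorm_gSeries_term_le hq hθ hd hQdeg hQ hl (Finset.mem_Icc.1 hi).2
    (Finset.mem_Icc.1 hj).2 (c i j)

end Chain

theorem gSeriesBound_ne_top (q : ℕ) (d μ : ℕ → ℕ) (c : ℕ → ℕ → F) (r l n : ℕ) :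
    gSeriesBound q d μ c r l n ≠ ⊤ :=
  ((Finset.sup_lt_iff (by simp)).2 fun _ _ =>
    (Finset.sup_lt_iff (by simp)).2 fun _ _ => ENNReal.ofReal_lt_top).ne

theorem tendsto_gSeriesBound {q : ℕ} (hq : 2 ≤ q) {d μ : ℕ → ℕ} {c : ℕ → ℕ → F} {r l : ℕ}
    (hc : ∀ i ∈ Finset.Icc l r, ∀ j ∈ Finset.Icc 1 (d i),
      ‖c i j‖ < (q : ℝ) ^ ((j : ℝ) + (d i : ℝ) / ((q : ℝ) - 1))) :
    Tendsto (gSeriesBound q d μ c r l) atTop (𝓝 0) := by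
  have hq0 : (0 : ℝ) < q := by positivity
  have hterm : ∀ i ∈ Finset.Icc l r, ∀ j ∈ Finset.Icc 1 (d i), Tendsto (fun n : ℕ =>
      ENNReal.ofReal ((q : ℝ) ^ (((∑ k ∈ Finset.Ico l i, μ k : ℕ) : ℝ)
          + (d l : ℝ) * (q : ℝ) / ((q : ℝ) - 1)) *
        (‖c i j‖ * (q : ℝ) ^ (-(j : ℝ) - (d i : ℝ) / ((q : ℝ) - 1))) ^ q ^ n))
      atTop (𝓝 0) := by
    intro i hi j hj
    have hlt : ‖c i j‖ * (q : ℝ) ^ (-(j : ℝ) - (d i : ℝ) / ((q : ℝ) - 1)) < 1 := by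
      rw [show -(j : ℝ) - (d i : ℝ) / ((q : ℝ) - 1) = -((j : ℝ) + (d i : ℝ) / ((q : ℝ) - 1))
        by ring, Real.rpow_neg hq0.le, ← div_eq_mul_inv, div_lt_one (by positivity)]
      exact hc i hi j hj
    have hpow := ((tendsto_pow_atTop_nhds_zero_of_lt_one (by positivity) hlt).comp
      (tendsto_pow_atTop_atTop_of_one_lt (by omega : 1 < q))).const_mul
        ((q : ℝ) ^ (((∑ k ∈ Finset.Ico l i, μ k : ℕ) : ℝ) + (d l : ℝ) * (q : ℝ) / ((q : ℝ) - 1)))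
    simpa using ENNReal.tendsto_ofReal hpow
  rw [show (0 : ℝ≥0∞) = (Finset.Icc l r).sup fun i => (Finset.Icc 1 (d i)).sup fun _ => 0 from
    (Finset.sup_eq_zero.2 fun _ _ => Finset.sup_eq_zero.2 fun _ _ => rfl).symm]
  exact Tendsto.finset_sup_nhds_apply fun i hi => Tendsto.finset_sup_nhds_apply (hterm i hi)

theorem statement3_general
    {F : Type*} [NormedField F] [IsUltrametricDist F] [CompleteSpace F]
    (q : ℕ) (hq : IsPrimePow q) (θ : F) (hθ : ‖θ‖ = (q : ℝ))
    (r : ℕ) (s : ℕ → ℕ)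
    (d : ℕ → ℕ) (hd : ∀ i, d i = ∑ k ∈ Finset.Icc i r, s k)
    (μ : ℕ → ℕ) (Q : ℕ → Polynomial F)
    (hQdeg : ∀ k, 1 ≤ k → k ≤ r - 1 → (Q k).natDegree ≤ μ k)
    (hQ : ∀ k, 1 ≤ k → k ≤ r - 1 → ∀ m,
      ‖(Q k).coeff m‖ ≤ (q : ℝ) ^ ((s k : ℝ) * (q : ℝ) / ((q : ℝ) - 1)))
    (c : ℕ → ℕ → F)
    (hc : ∀ i j, 1 ≤ i → i ≤ r → 1 ≤ j → j ≤ d i →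
      ‖c i j‖ < (q : ℝ) ^ ((j : ℝ) + (d i : ℝ) / ((q : ℝ) - 1))) :
    ∀ l, 1 ≤ l → l ≤ r →
      (∀ n, 1 ≤ n →
        gaussNorm q (gSeries q θ d Q c r l n) ≠ ⊤ ∧
        gaussNorm q (gSeries q θ d Q c r l n) ≤
          (Finset.Icc l r).sup (fun i => (Finset.Icc 1 (d i)).sup (fun j =>
            ENNReal.ofReal
              ((q : ℝ) ^ (((∑ k ∈ Finset.Ico l i, μ k : ℕ) : ℝ)
                  + (d l : ℝ) * (q : ℝ) / ((q : ℝ) - 1)) *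
                (‖c i j‖ * (q : ℝ) ^ (-(j : ℝ) - (d i : ℝ) / ((q : ℝ) - 1))) ^ q ^ n))))
      ∧ Tendsto (fun n => gaussNorm q (gSeries q θ d Q c r l n)) atTop (nhds 0)
      ∧ ∃ g : PowerSeries F, gaussNorm q g ≠ ⊤ ∧
          Tendsto (fun N => gaussNorm q (g - ∑ n ∈ Finset.Icc 1 N, gSeries q θ d Q c r l n))
            atTop (nhds 0) := by
  intro l hl _
  have hq2 : 2 ≤ q := hq.two_le
  have hbound := gaussNorm_gSeries_le hq2 hθ hd hQdeg hQ c hl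
  have hfin : ∀ n, gaussNorm q (gSeries q θ d Q c r l n) ≠ ⊤ := fun n =>
    ne_top_of_le_ne_top (gSeriesBound_ne_top q d μ c r l n) (hbound n)
  have htend : Tendsto (fun n => gaussNorm q (gSeries q θ d Q c r l n)) atTop (𝓝 0) :=
    tendsto_of_tendsto_of_tendsto_of_le_of_le tendsto_const_nhds
      (tendsto_gSeriesBound hq2 fun i hi j hj => hc i j (hl.trans (Finset.mem_Icc.1 hi).1)
        (Finset.mem_Icc.1 hi).2 (Finset.mem_Icc.1 hj).1 (Finset.mem_Icc.1 hj).2)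
      (fun _ => zero_le) hbound
  obtain ⟨g, hg, hlim⟩ := exists_tendsto_gaussNorm_sub_sum (by omega) (fun n => hfin (n + 1))
    (htend.comp (tendsto_add_atTop_nat 1))
  refine ⟨fun n _ => ⟨hfin n, hbound n⟩, htend, g, hg, ?_⟩
  have hshift : ∀ N, ∑ n ∈ Finset.Icc 1 N, gSeries q θ d Q c r l n =
      ∑ n ∈ Finset.range N, gSeries q θ d Q c r l (n + 1) := fun N => by
    rw [Finset.range_eq_Ico, Finset.sum_Ico_add' _ 0 N 1]
    rfl
  simpa only [hshift] using hlim

/-- Proposition 4.2 of the paper: convergence of the series defining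
`𝐠 = Σ_{n≥1} 𝐰^{(n)}(Φ′⁻¹)^{(n)}⋯(Φ′⁻¹)^{(1)}` in the Tate algebra `𝕋_θ`.  For each
`1 ≤ ℓ ≤ r` and `n ≥ 1`, the Gauss norm of `g_n^{(ℓ)}` is finite and bounded by
`max_{i,j} q^{(μ_ℓ+⋯+μ_{i−1}) + d_ℓ q/(q−1)}·(|c_{i,j}| q^{−j−d_i/(q−1)})^{q^n}`;
consequently `‖g_n^{(ℓ)}‖_θ → 0`, and the partial sums `Σ_{n=1}^N g_n^{(ℓ)}` converge in
Gauss norm to some `g^{(ℓ)}` of finite Gauss norm. -/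
theorem statement3
    {F : Type*} [NormedField F] [IsUltrametricDist F] [CompleteSpace F]
    (q : ℕ) (hq : IsPrimePow q) (θ : F) (hθ : ‖θ‖ = (q : ℝ))
    (r : ℕ) (hr : 1 ≤ r) (s : ℕ → ℕ) (hs : ∀ k, 1 ≤ k → k ≤ r → 0 < s k)
    (d : ℕ → ℕ) (hd : ∀ i, d i = ∑ k ∈ Finset.Icc i r, s k)
    (μ : ℕ → ℕ) (Q : ℕ → Polynomial F)
    (hQdeg : ∀ k, 1 ≤ k → k ≤ r - 1 → (Q k).natDegree ≤ μ k)
    (hQ : ∀ k, 1 ≤ k → k ≤ r - 1 → ∀ m,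
      ‖(Q k).coeff m‖ ≤ (q : ℝ) ^ ((s k : ℝ) * (q : ℝ) / ((q : ℝ) - 1)))
    (c : ℕ → ℕ → F)
    (hc : ∀ i j, 1 ≤ i → i ≤ r → 1 ≤ j → j ≤ d i →
      ‖c i j‖ < (q : ℝ) ^ ((j : ℝ) + (d i : ℝ) / ((q : ℝ) - 1))) :
    ∀ l, 1 ≤ l → l ≤ r →
      (∀ n, 1 ≤ n →
        gaussNorm q (gSeries q θ d Q c r l n) ≠ ⊤ ∧
        gaussNorm q (gSeries q θ d Q c r l n) ≤
          (Finset.Icc l r).sup (fun i => (Finset.Icc 1 (d i)).sup (fun j =>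
            ENNReal.ofReal
              ((q : ℝ) ^ (((∑ k ∈ Finset.Ico l i, μ k : ℕ) : ℝ)
                  + (d l : ℝ) * (q : ℝ) / ((q : ℝ) - 1)) *
                (‖c i j‖ * (q : ℝ) ^ (-(j : ℝ) - (d i : ℝ) / ((q : ℝ) - 1))) ^ q ^ n))))
      ∧ Tendsto (fun n => gaussNorm q (gSeries q θ d Q c r l n)) atTop (nhds 0)
      ∧ ∃ g : PowerSeries F, gaussNorm q g ≠ ⊤ ∧
          Tendsto (fun N => gaussNorm q (g - ∑ n ∈ Finset.Icc 1 N, gSeries q θ d Q c r l n))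
            atTop (nhds 0) :=
  statement3_general q hq θ hθ r s d hd μ Q hQdeg hQ c hc
end
end

section
/- Let 𝔰 = (s_1,…,s_r) be a tuple of positive integers and u = (u_1,…,u_r) ∈ F^r with |u_1| < q^{s_1·q/(q−1)} and |u_k| ≤ q^{s_k·q/(q−1)} for 2 ≤ k ≤ r, and write 𝔏i⋆_{𝔰,u} = Σ_{m≥0} c_m t^m ∈ F[[t]]. Then |c_m|·q^m → 0 as m → ∞, the family (c_m·θ^m)_{m≥0} is summable in F, and Σ_{m≥0} c_m·θ^m = Li⋆_𝔰(u) (whose defining family over i_1 ≥ ⋯ ≥ i_r ≥ 0 is summable in F). (This is the specialization identity 𝔏i⋆_{𝔰,u}|_{t=θ} = Li⋆_𝔰(u) of Section 3.1 of the paper.) -/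
open PowerSeries Filter Topology
open scoped ENNReal

noncomputable section

/-- The product (coefficientwise) topology on `PowerSeries F`. -/
instance psTop {F : Type*} [Semiring F] [TopologicalSpace F] :
    TopologicalSpace (PowerSeries F) :=
  TopologicalSpace.induced (fun φ (n : ℕ) => PowerSeries.coeff n φ) inferInstance

variable {F : Type*} [Field F]

/-- `𝕃_i = (t-θ^q)⋯(t-θ^{q^i})` as a formal power series. -/
def LL (q : ℕ) (θ : F) (i : ℕ) : PowerSeries F :=
  ∏ m ∈ Finset.range i, (PowerSeries.X - PowerSeries.C (θ ^ q ^ (m + 1)))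

/-- `L_i = (θ-θ^q)⋯(θ-θ^{q^i})`. -/
def LF (q : ℕ) (θ : F) (i : ℕ) : F :=
  ∏ m ∈ Finset.range i, (θ - θ ^ q ^ (m + 1))

/-- General term `u_1^{q^{i_1}}⋯u_r^{q^{i_r}}·(𝕃_{i_1}^{s_1}⋯𝕃_{i_r}^{s_r})⁻¹` of a
t-motivic Carlitz multiple (star) polylogarithm. -/
def polyLogTerm (q : ℕ) (θ : F) {r : ℕ} (s : Fin r → ℕ) (u : Fin r → F)
    (i : Fin r → ℕ) : PowerSeries F :=
  ∏ k, PowerSeries.C (u k ^ q ^ i k) * (LL q θ (i k) ^ s k)⁻¹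

/-!
Put `A = q ^ (q / (q - 1))`. Since `|L_j| = A ^ (q ^ j - 1)`, the `i`-th term of `Li⋆_𝔰(u)` has
norm `∏ₖ (|u_k| / A ^ s_k) ^ q ^ i_k · A ^ s_k ≤ C δ ^ q ^ i_1` with `δ < 1`, and because the
coefficients of `(t - θ ^ q ^ m)⁻¹` are bounded by `q ^ (-q (n + 1))`, the `n`-th coefficient of
the matching term of `𝔏i⋆_{𝔰,u}` is bounded by the same quantity times `q ^ (-q n)`. Multiplied by
`θ ^ n`, the double family therefore tends to zero cofinitely, hence is summable in the complete
ultrametric field, and its two iterated sums agree. Termwise, substituting `t = θ` is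
multiplicative on power series that converge absolutely at `θ`, which turns each term of `𝔏i⋆`
into the matching term of `Li⋆`.
-/

theorem tendsto_cofinite_prod_mul {α β R : Type*} [NonUnitalSeminormedRing R] {f : α → R}
    {g : β → R} (hf : Tendsto f cofinite (𝓝 0)) (hg : Tendsto g cofinite (𝓝 0)) :
    Tendsto (fun p : α × β => f p.1 * g p.2) cofinite (𝓝 0) := by
  obtain ⟨F, hF⟩ := hf.norm.bddAbove_range_of_cofinite
  obtain ⟨G, hG⟩ := hg.norm.bddAbove_range_of_cofinite
  rw [← coprod_cofinite, Filter.coprod, tendsto_sup]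
  exact ⟨(hf.comp tendsto_comap).zero_mul_isBoundedUnder_le
      (isBoundedUnder_of ⟨G, fun p => hG ⟨p.2, rfl⟩⟩),
    isBoundedUnder_le_mul_tendsto_zero (isBoundedUnder_of ⟨F, fun p => hF ⟨p.1, rfl⟩⟩)
      (hg.comp tendsto_comap)⟩

theorem tendsto_apply_cofinite_atTop_of_isBot {ι : Type*} [Finite ι] [Preorder ι] {a : ι}
    (ha : IsBot a) : Tendsto (fun i : {i : ι → ℕ // Antitone i} => i.1 a) cofinite atTop := by
  have := Fintype.ofFinite ι
  classical
  rw [← Nat.cofinite_eq_atTop]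
  refine Tendsto.cofinite_of_finite_preimage_singleton fun N => Set.Finite.to_subtype ?_
  refine ((Set.finite_Iic fun _ => N).preimage Subtype.val_injective.injOn).subset ?_
  rintro i (hi : i.1 a = N) k
  exact hi ▸ i.2 (ha k)

namespace PowerSeries

section PiTopology

variable {R : Type*} [Semiring R] [TopologicalSpace R]

theorem hasSum_iff_hasSum_coeff {ι : Type*} {f : ι → R⟦X⟧} {a : R⟦X⟧} :
    HasSum f a ↔ ∀ n, HasSum (fun i => coeff n (f i)) (coeff n a) := by
  simp only [HasSum, nhds_induced, tendsto_comap_iff, tendsto_pi_nhds, Function.comp_def,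
    map_sum]

theorem hasSum_mk_tsum_coeff [T2Space R] {ι : Type*} {f : ι → R⟦X⟧}
    (h : ∀ n, Summable fun i => coeff n (f i)) :
    HasSum f (mk fun n => ∑' i, coeff n (f i)) :=
  hasSum_iff_hasSum_coeff.2 fun n => by simpa only [coeff_mk] using (h n).hasSum

instance [T2Space R] : T2Space R⟦X⟧ :=
  Topology.IsEmbedding.t2Space ⟨⟨rfl⟩, fun _ _ h => ext fun n => congrFun h n⟩

theorem coeff_tsum [T2Space R] {ι : Type*} {f : ι → R⟦X⟧}
    (h : ∀ n, Summable fun i => coeff n (f i)) (n : ℕ) :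
    coeff n (∑' i, f i) = ∑' i, coeff n (f i) := by
  rw [(hasSum_mk_tsum_coeff h).tsum_eq, coeff_mk]

end PiTopology

section Inverse

variable {K : Type*} [Field K]

theorem inv_prod {ι : Type*} (t : Finset ι) (φ : ι → K⟦X⟧) :
    (∏ k ∈ t, φ k)⁻¹ = ∏ k ∈ t, (φ k)⁻¹ := by
  induction t using Finset.cons_induction with
  | empty => simp
  | cons a t ha ih => rw [Finset.prod_cons, Finset.prod_cons, PowerSeries.mul_inv_rev, ih, mul_comm]

theorem inv_pow (φ : K⟦X⟧) (s : ℕ) : (φ ^ s)⁻¹ = φ⁻¹ ^ s := by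
  simpa using inv_prod (Finset.range s) fun _ => φ

theorem inv_X_sub_C {a : K} (ha : a ≠ 0) : (X - C a)⁻¹ = -invUnitsSub (Units.mk0 a ha) := by
  rw [PowerSeries.inv_eq_iff_mul_eq_one (by simp [ha]), ← invUnitsSub_mul_sub (Units.mk0 a ha),
    Units.val_mk0]
  ring

end Inverse

section Evaluation

variable {K : Type*} [NormedField K]

theorem norm_coeff_inv_X_sub_C {a : K} (ha : a ≠ 0) (n : ℕ) :
    ‖coeff n (X - C a)⁻¹‖ = ‖a‖⁻¹ ^ (n + 1) := by
  simp [inv_X_sub_C ha, coeff_invUnitsSub, divp]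

structure HasAbsEval (φ : K⟦X⟧) (x v : K) : Prop where
  summable_norm : Summable fun n => ‖coeff n φ * x ^ n‖
  hasSum : HasSum (fun n => coeff n φ * x ^ n) v

theorem hasAbsEval_coe (p : Polynomial K) (x : K) : HasAbsEval (p : K⟦X⟧) x (p.eval x) := by
  have hvanish : ∀ n ∉ Finset.range (p.natDegree + 1), coeff n (p : K⟦X⟧) * x ^ n = 0 := by
    intro n hn
    rw [Polynomial.coeff_coe, Polynomial.coeff_eq_zero_of_natDegree_lt (by simpa using hn),
      zero_mul]
  refine ⟨summable_of_ne_finset_zero fun n hn => by rw [hvanish n hn, norm_zero], ?_⟩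
  rw [Polynomial.eval_eq_sum_range]
  simpa only [Polynomial.coeff_coe] using hasSum_sum_of_ne_finset_zero hvanish

namespace HasAbsEval

variable [CompleteSpace K] {φ ψ : K⟦X⟧} {x v w : K}

theorem mul (hφ : HasAbsEval φ x v) (hψ : HasAbsEval ψ x w) : HasAbsEval (φ * ψ) x (v * w) := by
  have hcauchy : ∀ n, coeff n (φ * ψ) * x ^ n =
      ∑ kl ∈ Finset.HasAntidiagonal.antidiagonal n,
        (coeff kl.1 φ * x ^ kl.1) * (coeff kl.2 ψ * x ^ kl.2) := by
    intro n
    rw [coeff_mul, Finset.sum_mul]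
    refine Finset.sum_congr rfl fun kl hkl => ?_
    rw [← Finset.HasAntidiagonal.mem_antidiagonal.mp hkl, pow_add]
    ring
  have hsum : Summable fun n => ‖coeff n (φ * ψ) * x ^ n‖ := by
    simpa only [hcauchy] using
      summable_norm_sum_mul_antidiagonal_of_summable_norm hφ.summable_norm hψ.summable_norm
  have hvw : v * w = ∑' n, coeff n (φ * ψ) * x ^ n := by
    rw [← hφ.hasSum.tsum_eq, ← hψ.hasSum.tsum_eq,
      tsum_mul_tsum_eq_tsum_sum_antidiagonal_of_summable_norm hφ.summable_norm hψ.summable_norm]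
    exact (tsum_congr hcauchy).symm
  exact ⟨hsum, hvw ▸ hsum.of_norm.hasSum⟩

theorem prod {ι : Type*} (t : Finset ι) {φ : ι → K⟦X⟧} {v : ι → K}
    (h : ∀ k ∈ t, HasAbsEval (φ k) x (v k)) :
    HasAbsEval (∏ k ∈ t, φ k) x (∏ k ∈ t, v k) := by
  induction t using Finset.cons_induction with
  | empty => simpa using hasAbsEval_coe 1 x
  | cons a t ha ih =>
    simp only [Finset.prod_cons]
    exact (h a (t.mem_cons_self a)).mul (ih fun k hk => h k (Finset.mem_cons_of_mem hk))

theorem inv (hφ : HasAbsEval φ x v) (hc : constantCoeff φ ≠ 0)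
    (hsum : Summable fun n => ‖coeff n φ⁻¹ * x ^ n‖) : HasAbsEval φ⁻¹ x v⁻¹ := by
  have hone := hφ.mul ⟨hsum, hsum.of_norm.hasSum⟩
  rw [PowerSeries.mul_inv_cancel _ hc] at hone
  have hvw := hone.hasSum.unique (by simpa using (hasAbsEval_coe 1 x).hasSum)
  rw [inv_eq_of_mul_eq_one_right hvw]
  exact ⟨hsum, hsum.of_norm.hasSum⟩

end HasAbsEval

end Evaluation

section Ultrametric

variable {K : Type*} [NormedField K] [IsUltrametricDist K] {ρ : ℝ}

theorem norm_coeff_mul_le {φ ψ : K⟦X⟧} {B C : ℝ} (hφ : ∀ n, ‖coeff n φ‖ ≤ B * ρ ^ n)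
    (hψ : ∀ n, ‖coeff n ψ‖ ≤ C * ρ ^ n) (n : ℕ) :
    ‖coeff n (φ * ψ)‖ ≤ B * C * ρ ^ n := by
  rw [coeff_mul]
  refine IsUltrametricDist.norm_sum_le_of_forall_le_of_nonempty ⟨(0, n), by simp⟩ ?_
  intro kl hkl
  rw [← Finset.HasAntidiagonal.mem_antidiagonal.mp hkl, norm_mul, pow_add]
  calc ‖coeff kl.1 φ‖ * ‖coeff kl.2 ψ‖ ≤ (B * ρ ^ kl.1) * (C * ρ ^ kl.2) :=
        mul_le_mul (hφ _) (hψ _) (norm_nonneg _) ((norm_nonneg _).trans (hφ _))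
    _ = B * C * (ρ ^ kl.1 * ρ ^ kl.2) := by ring

theorem norm_coeff_prod_le {ι : Type*} (t : Finset ι) {φ : ι → K⟦X⟧} {B : ι → ℝ} (hρ : 0 ≤ ρ)
    (h : ∀ k ∈ t, ∀ n, ‖coeff n (φ k)‖ ≤ B k * ρ ^ n) (n : ℕ) :
    ‖coeff n (∏ k ∈ t, φ k)‖ ≤ (∏ k ∈ t, B k) * ρ ^ n := by
  induction t using Finset.cons_induction generalizing n with
  | empty =>
    rcases eq_or_ne n 0 with rfl | hn
    · simp
    · simpa [coeff_one, hn] using pow_nonneg hρ n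
  | cons a t ha ih =>
    simp only [Finset.prod_cons]
    exact norm_coeff_mul_le (h a (t.mem_cons_self a))
      (ih fun k hk => h k (Finset.mem_cons_of_mem hk)) n

theorem norm_coeff_pow_le {φ : K⟦X⟧} {B : ℝ} (hρ : 0 ≤ ρ) (h : ∀ n, ‖coeff n φ‖ ≤ B * ρ ^ n)
    (s n : ℕ) : ‖coeff n (φ ^ s)‖ ≤ B ^ s * ρ ^ n := by
  simpa using norm_coeff_prod_le (Finset.range s) (B := fun _ => B) hρ (fun _ _ => h) n

theorem norm_coeff_inv_prod_X_sub_C_le {ι : Type*} (t : Finset ι) {a : ι → K} (hρ : 0 < ρ)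
    (ha : ∀ m ∈ t, ρ⁻¹ ≤ ‖a m‖) (n : ℕ) :
    ‖coeff n (∏ m ∈ t, (X - C (a m)))⁻¹‖ ≤ (∏ m ∈ t, ‖a m‖)⁻¹ * ρ ^ n := by
  rw [inv_prod, ← Finset.prod_inv_distrib]
  refine norm_coeff_prod_le t hρ.le (fun m hm k => ?_) n
  have ham : 0 < ‖a m‖ := (inv_pos.2 hρ).trans_le (ha m hm)
  rw [norm_coeff_inv_X_sub_C (norm_pos_iff.1 ham), pow_succ']
  gcongr
  exact inv_le_of_inv_le₀ hρ (ha m hm)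

variable [CompleteSpace K]

theorem hasSum_coeff_tsum_mul_pow {ι : Type*} {φ : ι → K⟦X⟧} {v : ι → K} {x : K} (hx : x ≠ 0)
    {b : ι → ℝ} {σ : ℝ} (hb : Tendsto b cofinite (𝓝 0)) (hσ0 : 0 ≤ σ) (hσ1 : σ < 1)
    (hφ : ∀ i n, ‖coeff n (φ i) * x ^ n‖ ≤ b i * σ ^ n)
    (hv : ∀ i, HasSum (fun n => coeff n (φ i) * x ^ n) (v i)) :
    Summable φ ∧ Summable v ∧ Tendsto (fun n => ‖coeff n (∑' i, φ i) * x ^ n‖) atTop (𝓝 0) ∧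
      HasSum (fun n => coeff n (∑' i, φ i) * x ^ n) (∑' i, v i) := by
  have hσ : Tendsto (fun n => σ ^ n) atTop (𝓝 0) := tendsto_pow_atTop_nhds_zero_of_lt_one hσ0 hσ1
  have hcoeff (n : ℕ) : Summable fun i => coeff n (φ i) := by
    refine NonarchimedeanAddGroup.summable_of_tendsto_cofinite_zero <|
      squeeze_zero_norm (fun i => ?_) (by simpa using hb.mul_const (σ ^ n / ‖x‖ ^ n))
    rw [← mul_div_assoc, le_div_iff₀ (by positivity), ← norm_pow, ← norm_mul]
    exact hφ i n
  have hcoeff_tsum (n : ℕ) : coeff n (∑' i, φ i) * x ^ n = ∑' i, coeff n (φ i) * x ^ n := by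
    rw [coeff_tsum hcoeff, tsum_mul_right]
  let g : ι × ℕ → K := fun p => coeff p.2 (φ p.1) * x ^ p.2
  have hg : HasSum g (∑' p, g p) := by
    refine (NonarchimedeanAddGroup.summable_of_tendsto_cofinite_zero <|
      squeeze_zero_norm (f := g) (fun p => hφ p.1 p.2) (tendsto_cofinite_prod_mul hb ?_)).hasSum
    rwa [Nat.cofinite_eq_atTop]
  have hvsum : HasSum v (∑' p, g p) := hg.prod_fiberwise hv
  refine ⟨(hasSum_mk_tsum_coeff hcoeff).summable, hvsum.summable, ?_, ?_⟩
  · obtain ⟨C, hC⟩ := hb.bddAbove_range_of_cofinite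
    refine squeeze_zero (fun n => norm_nonneg _) (fun n => ?_)
      (by simpa using hσ.const_mul (max C 0))
    rw [hcoeff_tsum]
    refine IsUltrametricDist.norm_tsum_le_of_forall_le_of_nonneg (by positivity)
      fun i => (hφ i n).trans ?_
    gcongr
    exact le_max_of_le_left (hC ⟨i, rfl⟩)
  · rw [hvsum.tsum_eq]
    refine ((Equiv.prodComm ℕ ι).hasSum_iff.2 hg).prod_fiberwise fun n => ?_
    rw [hcoeff_tsum]
    exact ((hcoeff n).mul_right (x ^ n)).hasSum

end Ultrametric

end PowerSeries

def carlitzRadius (q : ℕ) : ℝ := (q : ℝ) ^ ((q : ℝ) / ((q : ℝ) - 1))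

theorem carlitzRadius_pos {q : ℕ} (hq : 0 < q) : 0 < carlitzRadius q := by
  unfold carlitzRadius
  positivity

theorem rpow_eq_carlitzRadius_pow (q s : ℕ) :
    (q : ℝ) ^ ((s : ℝ) * (q : ℝ) / ((q : ℝ) - 1)) = carlitzRadius q ^ s := by
  rw [carlitzRadius, ← Real.rpow_natCast, ← Real.rpow_mul (Nat.cast_nonneg q)]
  ring_nf

theorem carlitzRadius_pow_pred {q : ℕ} (hq : 1 < q) : carlitzRadius q ^ (q - 1) = (q : ℝ) ^ q := by
  have hq' : (1 : ℝ) < q := by exact_mod_cast hq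
  rw [carlitzRadius, ← Real.rpow_natCast, ← Real.rpow_mul (Nat.cast_nonneg q),
    Nat.cast_pred (by omega), div_mul_cancel₀ _ (by linarith), Real.rpow_natCast]

theorem inv_pow_self_mul_lt_one {q : ℕ} (hq : 1 < q) : ((q : ℝ) ^ q)⁻¹ * q < 1 :=
  (inv_mul_lt_one₀ (by positivity)).2 (lt_self_pow₀ (by exact_mod_cast hq) hq)

theorem hasAbsEval_LL_pow {K : Type*} [NormedField K] (q : ℕ) (θ : K) (i s : ℕ) :
    HasAbsEval (LL q θ i ^ s) θ (LF q θ i ^ s) := by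
  convert hasAbsEval_coe
    ((∏ m ∈ Finset.range i, (Polynomial.X - Polynomial.C (θ ^ q ^ (m + 1)))) ^ s) θ
  · rw [LL, ← Polynomial.coeToPowerSeries.ringHom_apply, map_pow, map_prod]
    simp
  · simp [LF, Polynomial.eval_prod]

section Carlitz

variable {K : Type*} [NormedField K] [IsUltrametricDist K] {q : ℕ} {θ : K}

theorem norm_sub_pow_q_pow (hq : 1 < q) (hθ : ‖θ‖ = q) (m : ℕ) :
    ‖θ - θ ^ q ^ (m + 1)‖ = (q : ℝ) ^ q ^ (m + 1) := by
  have hlt : ‖θ‖ < ‖θ ^ q ^ (m + 1)‖ := by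
    rw [norm_pow, hθ]
    exact lt_self_pow₀ (by exact_mod_cast hq) (Nat.one_lt_pow (Nat.succ_ne_zero m) hq)
  rw [sub_eq_add_neg,
    IsUltrametricDist.norm_add_eq_max_of_norm_ne_norm (by rw [norm_neg]; exact hlt.ne), norm_neg,
    max_eq_right hlt.le, norm_pow, hθ]

theorem norm_LF_succ (hq : 1 < q) (hθ : ‖θ‖ = q) (j : ℕ) :
    ‖LF q θ (j + 1)‖ = ‖LF q θ j‖ * (q : ℝ) ^ q ^ (j + 1) := by
  rw [LF, LF, Finset.prod_range_succ, norm_mul, norm_sub_pow_q_pow hq hθ]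

theorem carlitzRadius_pow_q_pow (hq : 1 < q) (hθ : ‖θ‖ = q) (j : ℕ) :
    carlitzRadius q ^ q ^ j = ‖LF q θ j‖ * carlitzRadius q := by
  induction j with
  | zero => simp [LF]
  | succ j ih =>
    calc carlitzRadius q ^ q ^ (j + 1)
        = (carlitzRadius q ^ (q - 1)) ^ q ^ j * carlitzRadius q ^ q ^ j := by
          rw [← pow_mul, ← pow_add, pow_succ, ← Nat.succ_mul, Nat.succ_eq_add_one,
            Nat.sub_add_cancel hq.le, mul_comm]
      _ = ‖LF q θ (j + 1)‖ * carlitzRadius q := by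
          rw [carlitzRadius_pow_pred hq, ih, norm_LF_succ hq hθ, ← pow_mul, ← pow_succ']
          ring

theorem norm_LF_pos (hq : 1 < q) (hθ : ‖θ‖ = q) (j : ℕ) : 0 < ‖LF q θ j‖ := by
  have hA := carlitzRadius_pos (q := q) (by omega)
  have := carlitzRadius_pow_q_pow hq hθ j
  nlinarith [pow_pos hA (q ^ j)]

theorem pow_q_pow_div_norm_LF_pow (hq : 1 < q) (hθ : ‖θ‖ = q) (y : ℝ) (j s : ℕ) :
    y ^ q ^ j / ‖LF q θ j‖ ^ s = (y / carlitzRadius q ^ s) ^ q ^ j * carlitzRadius q ^ s := by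
  have hA := carlitzRadius_pos (q := q) (by omega)
  have hL := norm_LF_pos hq hθ j
  rw [div_pow, ← pow_mul, mul_comm s, pow_mul, carlitzRadius_pow_q_pow hq hθ, mul_pow]
  field_simp

theorem norm_coeff_inv_LL_pow_le (hq : 1 < q) (hθ : ‖θ‖ = q) (i s n : ℕ) :
    ‖coeff n (LL q θ i ^ s)⁻¹‖ ≤ (‖LF q θ i‖ ^ s)⁻¹ * ((q : ℝ) ^ q)⁻¹ ^ n := by
  have hnorm (m : ℕ) : ‖θ ^ q ^ (m + 1)‖ = (q : ℝ) ^ q ^ (m + 1) := by rw [norm_pow, hθ]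
  have hLF : ‖LF q θ i‖ = ∏ m ∈ Finset.range i, ‖θ ^ q ^ (m + 1)‖ := by
    simp only [LF, norm_prod, norm_sub_pow_q_pow hq hθ, hnorm]
  have hinv := norm_coeff_inv_prod_X_sub_C_le (Finset.range i) (a := fun m => θ ^ q ^ (m + 1))
    (ρ := ((q : ℝ) ^ q)⁻¹) (by positivity) fun m _ => by
      rw [inv_inv, hnorm]
      exact pow_le_pow_right₀ (by exact_mod_cast hq.le) (Nat.le_self_pow (Nat.succ_ne_zero m) q)
  rw [PowerSeries.inv_pow, hLF, ← _root_.inv_pow]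
  exact norm_coeff_pow_le (by positivity) hinv s n

theorem norm_coeff_polyLogTerm_le (hq : 1 < q) (hθ : ‖θ‖ = q) {r : ℕ} (s : Fin r → ℕ)
    (u : Fin r → K) (i : Fin r → ℕ) (n : ℕ) :
    ‖coeff n (polyLogTerm q θ s u i)‖ ≤
      ‖∏ k, u k ^ q ^ i k / LF q θ (i k) ^ s k‖ * ((q : ℝ) ^ q)⁻¹ ^ n := by
  rw [polyLogTerm, norm_prod]
  refine norm_coeff_prod_le _ (by positivity) (fun k _ n => ?_) n
  rw [coeff_C_mul, norm_mul, norm_div, div_eq_mul_inv, norm_pow _ (s k), mul_assoc]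
  gcongr
  exact norm_coeff_inv_LL_pow_le hq hθ (i k) (s k) n

theorem norm_prod_div_LF_pow_le (hq : 1 < q) (hθ : ‖θ‖ = q) {ι : Type*} [Fintype ι]
    (s : ι → ℕ) {u : ι → K} (hu : ∀ k, ‖u k‖ ≤ carlitzRadius q ^ s k) (i : ι → ℕ) (a : ι) :
    ‖∏ k, u k ^ q ^ i k / LF q θ (i k) ^ s k‖ ≤
      (∏ k, carlitzRadius q ^ s k) * (‖u a‖ / carlitzRadius q ^ s a) ^ q ^ i a := by
  classical
  have hA := carlitzRadius_pos (q := q) (by omega)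
  simp only [norm_prod, norm_div, norm_pow, pow_q_pow_div_norm_LF_pow hq hθ,
    Finset.prod_mul_distrib]
  rw [mul_comm]
  gcongr
  rw [← Finset.mul_prod_erase _ _ (Finset.mem_univ a)]
  refine mul_le_of_le_one_right (by positivity) (Finset.prod_le_one (fun _ _ => by positivity)
    fun k _ => pow_le_one₀ (by positivity) ((div_le_one (by positivity)).2 (hu k)))

theorem tendsto_norm_prod_div_LF_pow (hq : 1 < q) (hθ : ‖θ‖ = q) {ι : Type*} [Fintype ι]
    [Preorder ι] {a : ι} (ha : IsBot a) (s : ι → ℕ) {u : ι → K}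
    (hua : ‖u a‖ < carlitzRadius q ^ s a) (hu : ∀ k, ‖u k‖ ≤ carlitzRadius q ^ s k) :
    Tendsto (fun i : {i : ι → ℕ // Antitone i} => ‖∏ k, u k ^ q ^ i.1 k / LF q θ (i.1 k) ^ s k‖)
      cofinite (𝓝 0) := by
  have hA := carlitzRadius_pos (q := q) (by omega)
  have hδ : ‖u a‖ / carlitzRadius q ^ s a < 1 := (div_lt_one (by positivity)).2 hua
  have hlim := ((tendsto_pow_atTop_nhds_zero_of_lt_one (by positivity) hδ).comp
    ((tendsto_pow_atTop_atTop_of_one_lt hq).comp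
      (tendsto_apply_cofinite_atTop_of_isBot ha))).const_mul (∏ k, carlitzRadius q ^ s k)
  rw [mul_zero] at hlim
  exact squeeze_zero (fun _ => norm_nonneg _)
    (fun i => norm_prod_div_LF_pow_le hq hθ s hu i.1 a) hlim

variable [CompleteSpace K]

theorem hasAbsEval_inv_LL_pow (hq : 1 < q) (hθ : ‖θ‖ = q) (i s : ℕ) :
    HasAbsEval (LL q θ i ^ s)⁻¹ θ (LF q θ i ^ s)⁻¹ := by
  have hθ0 : θ ≠ 0 := norm_ne_zero_iff.1 (by rw [hθ]; positivity)
  refine (hasAbsEval_LL_pow q θ i s).inv ?_ ?_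
  · rw [map_pow, LL, map_prod]
    exact pow_ne_zero _ (Finset.prod_ne_zero_iff.2 fun m _ => by simp [hθ0])
  · refine Summable.of_nonneg_of_le (fun _ => norm_nonneg _) (fun n => ?_)
      ((summable_geometric_of_lt_one (by positivity) (inv_pow_self_mul_lt_one hq)).mul_left
        (‖LF q θ i‖ ^ s)⁻¹)
    rw [norm_mul, norm_pow, hθ, mul_pow, ← mul_assoc]
    gcongr
    exact norm_coeff_inv_LL_pow_le hq hθ i s n

theorem hasAbsEval_polyLogTerm (hq : 1 < q) (hθ : ‖θ‖ = q) {r : ℕ} (s : Fin r → ℕ)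
    (u : Fin r → K) (i : Fin r → ℕ) :
    HasAbsEval (polyLogTerm q θ s u i) θ (∏ k, u k ^ q ^ i k / LF q θ (i k) ^ s k) :=
  HasAbsEval.prod _ fun k _ => by
    have := (hasAbsEval_coe (Polynomial.C (u k ^ q ^ i k)) θ).mul
      (hasAbsEval_inv_LL_pow hq hθ (i k) (s k))
    rwa [Polynomial.coe_C, Polynomial.eval_C, ← div_eq_mul_inv] at this

end Carlitz

theorem statement15_general
    {F : Type*} [NormedField F] [IsUltrametricDist F] [CompleteSpace F]
    (q : ℕ) (hq : IsPrimePow q) (θ : F) (hθ : ‖θ‖ = (q : ℝ))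
    {r : ℕ} (hr : 0 < r) (s : Fin r → ℕ)
    (u : Fin r → F)
    (h1 : ‖u ⟨0, hr⟩‖ < (q : ℝ) ^ ((s ⟨0, hr⟩ : ℝ) * (q : ℝ) / ((q : ℝ) - 1)))
    (hk : ∀ k : Fin r, k ≠ ⟨0, hr⟩ →
      ‖u k‖ ≤ (q : ℝ) ^ ((s k : ℝ) * (q : ℝ) / ((q : ℝ) - 1))) :
    Summable (fun i : {i : Fin r → ℕ // Antitone i} => polyLogTerm q θ s u i.1)
    ∧ Summable (fun i : {i : Fin r → ℕ // Antitone i} =>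
        ∏ k, u k ^ q ^ i.1 k / LF q θ (i.1 k) ^ s k)
    ∧ Tendsto (fun m : ℕ =>
        ‖PowerSeries.coeff m
            (∑' i : {i : Fin r → ℕ // Antitone i}, polyLogTerm q θ s u i.1)‖ * (q : ℝ) ^ m)
        atTop (nhds 0)
    ∧ HasSum (fun m : ℕ =>
        PowerSeries.coeff m
            (∑' i : {i : Fin r → ℕ // Antitone i}, polyLogTerm q θ s u i.1) * θ ^ m)
        (∑' i : {i : Fin r → ℕ // Antitone i},
          ∏ k, u k ^ q ^ i.1 k / LF q θ (i.1 k) ^ s k) := by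
  have hq1 : 1 < q := hq.one_lt
  have hθ0 : θ ≠ 0 := norm_ne_zero_iff.1 (by rw [hθ]; positivity)
  have hu (k : Fin r) : ‖u k‖ ≤ carlitzRadius q ^ s k := by
    rw [← rpow_eq_carlitzRadius_pow]
    rcases eq_or_ne k ⟨0, hr⟩ with rfl | hk0
    exacts [h1.le, hk k hk0]
  rw [rpow_eq_carlitzRadius_pow] at h1
  have hterm (i : {i : Fin r → ℕ // Antitone i}) (n : ℕ) :
      ‖coeff n (polyLogTerm q θ s u i.1) * θ ^ n‖ ≤
        ‖∏ k, u k ^ q ^ i.1 k / LF q θ (i.1 k) ^ s k‖ * (((q : ℝ) ^ q)⁻¹ * q) ^ n := by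
    rw [norm_mul, norm_pow, hθ, mul_pow, ← mul_assoc]
    gcongr
    exact norm_coeff_polyLogTerm_le hq1 hθ s u i.1 n
  obtain ⟨hφ, hv, hdecay, hspec⟩ := hasSum_coeff_tsum_mul_pow hθ0
    (tendsto_norm_prod_div_LF_pow hq1 hθ (fun k => Fin.le_def.2 (Nat.zero_le _)) s h1 hu)
    (by positivity)
    (inv_pow_self_mul_lt_one hq1) hterm
    (fun i => (hasAbsEval_polyLogTerm hq1 hθ s u i.1).hasSum)
  refine ⟨hφ, hv, ?_, hspec⟩
  simpa only [norm_mul, norm_pow, hθ] using hdecay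

/-- specialization identity `𝔏i⋆_{𝔰,u}|_{t=θ} = Li⋆_𝔰(u)` of
Section 3.1 of the paper.  Writing `𝔏i⋆_{𝔰,u} = Σ_m c_m t^m`, we have `|c_m| q^m → 0`,
the family `(c_m θ^m)` is summable in `F`, and its sum is `Li⋆_𝔰(u)`. -/
theorem statement15
    {F : Type*} [NormedField F] [IsUltrametricDist F] [CompleteSpace F]
    (q : ℕ) (hq : IsPrimePow q) (θ : F) (hθ : ‖θ‖ = (q : ℝ))
    {r : ℕ} (hr : 0 < r) (s : Fin r → ℕ) (hs : ∀ k, 0 < s k)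
    (u : Fin r → F)
    (h1 : ‖u ⟨0, hr⟩‖ < (q : ℝ) ^ ((s ⟨0, hr⟩ : ℝ) * (q : ℝ) / ((q : ℝ) - 1)))
    (hk : ∀ k : Fin r, k ≠ ⟨0, hr⟩ →
      ‖u k‖ ≤ (q : ℝ) ^ ((s k : ℝ) * (q : ℝ) / ((q : ℝ) - 1))) :
    Summable (fun i : {i : Fin r → ℕ // Antitone i} => polyLogTerm q θ s u i.1)
    ∧ Summable (fun i : {i : Fin r → ℕ // Antitone i} =>
        ∏ k, u k ^ q ^ i.1 k / LF q θ (i.1 k) ^ s k)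
    ∧ Tendsto (fun m : ℕ =>
        ‖PowerSeries.coeff m
            (∑' i : {i : Fin r → ℕ // Antitone i}, polyLogTerm q θ s u i.1)‖ * (q : ℝ) ^ m)
        atTop (nhds 0)
    ∧ HasSum (fun m : ℕ =>
        PowerSeries.coeff m
            (∑' i : {i : Fin r → ℕ // Antitone i}, polyLogTerm q θ s u i.1) * θ ^ m)
        (∑' i : {i : Fin r → ℕ // Antitone i},
          ∏ k, u k ^ q ^ i.1 k / LF q θ (i.1 k) ^ s k) :=
  statement15_general q hq θ hθ hr s u h1 hk
end
end
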